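/- arXiv:1504.07920 — 2 statements merged into one kernel-verified Lean document; each statement's English description precedes it below -/
import Mathlib

section
/- Assume the model is free of arbitrage. Then for every randomised stopping time χ ∈ X and every i = 1,…,d, the set P^i(χ) of χ-approximate equivalent martingale pairs (ℙ,S) with S^i_t = 1 for all t = 0,…,T is nonempty (and consequently so is the set P̄^i(χ) of χ-approximate pairs with S^i ≡ 1). -/
open Pointwise
open scoped MeasureTheory

noncomputable section

/-- Euclidean dot product on `Fin d → ℝ`. -/
def dotp {d : ℕ} (x y : Fin d → ℝ) : ℝ := ∑ i, x i * y i

/-- The `i`-th canonical basis vector of `ℝ^d`. -/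
def eVec {d : ℕ} (i : Fin d) : Fin d → ℝ := Pi.single i 1

/-- The solvency cone determined by a matrix of exchange rates: the convex cone
generated by the canonical basis vectors `e^i` and the vectors `π^{ij} e^i − e^j`. -/
def solvencyCone {d : ℕ} (π : Fin d → Fin d → ℝ) : Set (Fin d → ℝ) :=
  {x | ∃ a : Fin d → ℝ, ∃ b : Fin d → Fin d → ℝ,
    (∀ i, 0 ≤ a i) ∧ (∀ i j, 0 ≤ b i j) ∧
    x = (∑ i, a i • eVec i) + ∑ i, ∑ j, b i j • (π i j • eVec i - eVec j)}

/-- Positive polar of a set in `ℝ^d`. -/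
def posPolar {d : ℕ} (A : Set (Fin d → ℝ)) : Set (Fin d → ℝ) :=
  {x | ∀ y ∈ A, 0 ≤ dotp x y}

/-- A (closed) polyhedron: a finite intersection of closed half-spaces. -/
def IsPolyhedron {d : ℕ} (A : Set (Fin d → ℝ)) : Prop :=
  ∃ (n : ℕ) (a : Fin n → Fin d → ℝ) (b : Fin n → ℝ),
    A = {x | ∀ k, dotp (a k) x ≤ b k}

/-- A finite union of nonempty (closed) polyhedra. -/
def FinUnionPoly {d : ℕ} (A : Set (Fin d → ℝ)) : Prop :=
  ∃ (n : ℕ) (Q : Fin n → Set (Fin d → ℝ)),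
    (∀ k, IsPolyhedron (Q k) ∧ (Q k).Nonempty) ∧ A = ⋃ k, Q k

/-- The atom of the σ-algebra `m` containing `ω`. -/
def atomOf {Ω : Type*} (m : MeasurableSpace Ω) (ω : Ω) : Set Ω :=
  {ω' | ∀ A : Set Ω, MeasurableSet[m] A → ω ∈ A → ω' ∈ A}

variable {Ω : Type*}

/-- A stopping time with values in `0,…,T`. -/
def IsStoppingTime (F : ℕ → MeasurableSpace Ω) (T : ℕ) (τ : Ω → ℕ) : Prop :=
  (∀ ω, τ ω ≤ T) ∧ ∀ t, MeasurableSet[F t] {ω | τ ω ≤ t}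

/-- A randomised stopping time: an adapted nonnegative process with `Σ_{t=0}^T χ_t = 1`. -/
def IsRandomisedST [Fintype Ω] (F : ℕ → MeasurableSpace Ω) (T : ℕ) (χ : ℕ → Ω → ℝ) : Prop :=
  (∀ t, t ≤ T → Measurable[F t] (χ t)) ∧ (∀ t ω, t ≤ T → 0 ≤ χ t ω) ∧
  ∀ ω, ∑ t ∈ Finset.range (T + 1), χ t ω = 1

/-- `χ*_t = Σ_{s=t}^T χ_s`. -/
def chiStar (T : ℕ) (χ : ℕ → Ω → ℝ) (t : ℕ) (ω : Ω) : ℝ := ∑ s ∈ Finset.Icc t T, χ s ω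

/-- The truncated randomised stopping time `χ ∧ σ`,
`(χ∧σ)_t = χ_t 1_{t<σ} + χ*_t 1_{t=σ}`. -/
def trunc (T : ℕ) (χ : ℕ → Ω → ℝ) (σ : Ω → ℕ) (t : ℕ) (ω : Ω) : ℝ :=
  if t < σ ω then χ t ω else if t = σ ω then chiStar T χ t ω else 0

/-- The value `A_χ = Σ_{t=0}^T χ_t A_t` of an (adapted real) process at a randomised
stopping time. -/
def valAt (T : ℕ) (χ : ℕ → Ω → ℝ) (A : ℕ → Ω → ℝ) (ω : Ω) : ℝ :=
  ∑ t ∈ Finset.range (T + 1), χ t ω * A t ω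

/-- Expectation with respect to a probability `p` on a finite space. -/
def expect [Fintype Ω] (p : Ω → ℝ) (f : Ω → ℝ) : ℝ := ∑ ω, p ω * f ω

/-- The game option payoff
`Q_{st} = Y_t 1_{s>t} + X_s 1_{s<t} + X'_s 1_{s=t}`. -/
def payoffQ {d : ℕ} (Y X X' : ℕ → Ω → Fin d → ℝ) (s t : ℕ) (ω : Ω) : Fin d → ℝ :=
  if t < s then Y t ω else if s < t then X s ω else X' s ω

/-- The auxiliary payoff
`H_{st} = Y_t 1_{s>t} + X_s 1_{s=t<T} + X'_s 1_{s=t=T}`. -/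
def payoffH {d : ℕ} (T : ℕ) (Y X X' : ℕ → Ω → Fin d → ℝ) (s t : ℕ) (ω : Ω) : Fin d → ℝ :=
  if t < s then Y t ω
  else if s = t ∧ s < T then X s ω
  else if s = t ∧ s = T then X' s ω
  else 0

/-- `(Q_{σ·}·S_{σ∧·})_χ = Σ_{t=0}^{σ−1} χ_t Y_t·S_t + χ*_{σ+1} X_σ·S_σ + χ_σ X'_σ·S_σ`. -/
def sellerValue {d : ℕ} (T : ℕ) (Y X X' S : ℕ → Ω → Fin d → ℝ) (σ : Ω → ℕ)
    (χ : ℕ → Ω → ℝ) (ω : Ω) : ℝ :=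
  (∑ t ∈ Finset.range (σ ω), χ t ω * dotp (Y t ω) (S t ω))
    + chiStar T χ (σ ω + 1) ω * dotp (X (σ ω) ω) (S (σ ω) ω)
    + χ (σ ω) ω * dotp (X' (σ ω) ω) (S (σ ω) ω)

/-- `(Q_{·τ}·S_{·∧τ})_χ = Σ_{s=0}^{τ−1} χ_s X_s·S_s + χ*_{τ+1} Y_τ·S_τ + χ_τ X'_τ·S_τ`. -/
def buyerValue {d : ℕ} (T : ℕ) (Y X X' S : ℕ → Ω → Fin d → ℝ) (τ : Ω → ℕ)
    (χ : ℕ → Ω → ℝ) (ω : Ω) : ℝ :=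
  (∑ s ∈ Finset.range (τ ω), χ s ω * dotp (X s ω) (S s ω))
    + chiStar T χ (τ ω + 1) ω * dotp (Y (τ ω) ω) (S (τ ω) ω)
    + χ (τ ω) ω * dotp (X' (τ ω) ω) (S (τ ω) ω)

/-- The randomised stopping time `χ'_t = χ_t 1_{t<σ} + χ*_σ 1_{t=T}`. -/
def chiPrime (T : ℕ) (χ : ℕ → Ω → ℝ) (σ : Ω → ℕ) (t : ℕ) (ω : Ω) : ℝ :=
  if t < σ ω then χ t ω else if t = T then chiStar T χ (σ ω) ω else 0

/-- The Kabanov discrete-time currency model with proportional transaction costs on a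
finite probability space. -/
structure Market (Ω : Type*) [Fintype Ω] (d T : ℕ) where
  F : ℕ → MeasurableSpace Ω
  F_mono : ∀ s t : ℕ, s ≤ t → F s ≤ F t
  F_zero : F 0 = ⊥
  F_top : F T = ⊤
  P : Ω → ℝ
  P_pos : ∀ ω, 0 < P ω
  P_sum : ∑ ω, P ω = 1
  pi : ℕ → Fin d → Fin d → Ω → ℝ
  pi_pos : ∀ t, t ≤ T → ∀ i j ω, 0 < pi t i j ω
  pi_one : ∀ t, t ≤ T → ∀ i ω, pi t i i ω = 1
  pi_meas : ∀ t, t ≤ T → ∀ i j, Measurable[F t] (pi t i j)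

variable [Fintype Ω] {d T : ℕ}

/-- The solvency cone `K_t(ω)`. -/
def Market.cone (M : Market Ω d T) (t : ℕ) (ω : Ω) : Set (Fin d → ℝ) :=
  solvencyCone (fun i j => M.pi t i j ω)

/-- Self-financing (predictable) trading strategy. -/
def Market.SelfFinancing (M : Market Ω d T) (y : ℕ → Ω → Fin d → ℝ) : Prop :=
  Measurable[M.F 0] (y 0) ∧ (∀ t, t < T → Measurable[M.F t] (y (t + 1))) ∧
  ∀ t, t < T → ∀ ω, y t ω - y (t + 1) ω ∈ M.cone t ω

/-- Absence of arbitrage. -/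
def Market.NoArbitrage (M : Market Ω d T) : Prop :=
  ¬∃ y : ℕ → Ω → Fin d → ℝ, M.SelfFinancing y ∧ (∀ ω, y 0 ω = 0) ∧
    ∃ x : Ω → Fin d → ℝ, (∀ ω i, 0 ≤ x ω i) ∧ x ≠ 0 ∧ ∀ ω, y T ω - x ω ∈ M.cone T ω

/-- An equivalent martingale pair `(ℙ,S)` with `S_t ∈ K*_t \ {0}`. -/
def MartingalePair (M : Market Ω d T) (p : Ω → ℝ) (S : ℕ → Ω → Fin d → ℝ) : Prop :=
  (∀ ω, 0 < p ω) ∧ (∑ ω, p ω = 1) ∧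
  (∀ t, t ≤ T → Measurable[M.F t] (S t)) ∧
  (∀ t, t < T → ∀ A : Set Ω, MeasurableSet[M.F t] A →
    (∑ ω, A.indicator (fun ω' => p ω' • S (t + 1) ω') ω)
      = ∑ ω, A.indicator (fun ω' => p ω' • S t ω') ω) ∧
  ∀ t ω, t ≤ T → S t ω ∈ posPolar (M.cone t ω) ∧ S t ω ≠ 0

/-- A `χ`-approximate martingale pair `(ℙ,S)`. -/
def ApproxPair (M : Market Ω d T) (χ : ℕ → Ω → ℝ) (p : Ω → ℝ)
    (S : ℕ → Ω → Fin d → ℝ) : Prop :=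
  (∀ ω, 0 ≤ p ω) ∧ (∑ ω, p ω = 1) ∧
  (∀ t, t ≤ T → Measurable[M.F t] (S t)) ∧
  (∀ t ω, t ≤ T → S t ω ∈ posPolar (M.cone t ω) ∧ S t ω ≠ 0) ∧
  ∀ t ω, t ≤ T →
    (∑ ω', (atomOf (M.F t) ω).indicator
      (fun ω'' => p ω'' • ∑ s ∈ Finset.Icc (t + 1) T, χ s ω'' • S s ω'') ω')
      ∈ posPolar (M.cone t ω)

/-- A `χ`-approximate martingale pair with `S^i ≡ 1`: membership of `P̄^i(χ)`. -/
def ApproxPairI (M : Market Ω d T) (χ : ℕ → Ω → ℝ) (i : Fin d) (p : Ω → ℝ)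
    (S : ℕ → Ω → Fin d → ℝ) : Prop :=
  ApproxPair M χ p S ∧ ∀ t ω, t ≤ T → S t ω i = 1

/-- A `χ`-approximate equivalent martingale pair with `S^i ≡ 1`: membership of `P^i(χ)`. -/
def EquivApproxPairI (M : Market Ω d T) (χ : ℕ → Ω → ℝ) (i : Fin d) (p : Ω → ℝ)
    (S : ℕ → Ω → Fin d → ℝ) : Prop :=
  ApproxPairI M χ i p S ∧ ∀ ω, 0 < p ω

/-- A game option `(Y,X,X')`. -/
def IsGameOption (M : Market Ω d T) (Y X X' : ℕ → Ω → Fin d → ℝ) : Prop :=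
  (∀ t, t ≤ T → Measurable[M.F t] (Y t)) ∧ (∀ t, t ≤ T → Measurable[M.F t] (X t)) ∧
  (∀ t, t ≤ T → Measurable[M.F t] (X' t)) ∧
  ∀ t ω, t ≤ T → X t ω - X' t ω ∈ M.cone t ω ∧ X' t ω - Y t ω ∈ M.cone t ω

/-- `(σ,y)` hedges the game option `(Y,X,X')` for the seller:
`y_{σ∧τ} − Q_{στ} ∈ K_{σ∧τ}` for all stopping times `τ`. -/
def HedgesSeller (M : Market Ω d T) (Y X X' : ℕ → Ω → Fin d → ℝ) (σ : Ω → ℕ)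
    (y : ℕ → Ω → Fin d → ℝ) : Prop :=
  ∀ τ, IsStoppingTime M.F T τ → ∀ ω,
    y (min (σ ω) (τ ω)) ω - payoffQ Y X X' (σ ω) (τ ω) ω ∈ M.cone (min (σ ω) (τ ω)) ω

/-- `(τ,y)` hedges the game option `(Y,X,X')` for the buyer:
`y_{σ∧τ} + Q_{στ} ∈ K_{σ∧τ}` for all stopping times `σ`. -/
def HedgesBuyer (M : Market Ω d T) (Y X X' : ℕ → Ω → Fin d → ℝ) (τ : Ω → ℕ)
    (y : ℕ → Ω → Fin d → ℝ) : Prop :=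
  ∀ σ, IsStoppingTime M.F T σ → ∀ ω,
    y (min (σ ω) (τ ω)) ω + payoffQ Y X X' (σ ω) (τ ω) ω ∈ M.cone (min (σ ω) (τ ω)) ω

/-- The seller's sets `Z^a_t` (pointwise at each `ω`), by backward induction:
`Z^a_T = X'_T + K_T` and
`Z^a_t = ((Z^a_{t+1} ∩ L_t) + K_t) ∩ (Y_t + K_t) ∪ (X_t + K_t)` for `t < T`. -/
def Za (M : Market Ω d T) (Y X X' : ℕ → Ω → Fin d → ℝ) (t : ℕ) (ω : Ω) :
    Set (Fin d → ℝ) :=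
  if T ≤ t then {v | v - X' T ω ∈ M.cone T ω}
  else (({v : Fin d → ℝ | ∀ ω' ∈ atomOf (M.F t) ω, v ∈ Za M Y X X' (t + 1) ω'}
          + M.cone t ω)
        ∩ {v | v - Y t ω ∈ M.cone t ω})
      ∪ {v | v - X t ω ∈ M.cone t ω}
termination_by T - t
decreasing_by omega

/-- The seller's set `Y^a_t = Y_t + K_t` (pointwise). -/
def YaSet (M : Market Ω d T) (Y : ℕ → Ω → Fin d → ℝ) (t : ℕ) (ω : Ω) :
    Set (Fin d → ℝ) :=
  {v | v - Y t ω ∈ M.cone t ω}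

/-- The seller's set `X^a_t` (pointwise): `X_t + K_t` for `t < T`, `X'_T + K_T` at `T`. -/
def XaSet (M : Market Ω d T) (X X' : ℕ → Ω → Fin d → ℝ) (t : ℕ) (ω : Ω) :
    Set (Fin d → ℝ) :=
  if T ≤ t then {v | v - X' T ω ∈ M.cone T ω} else {v | v - X t ω ∈ M.cone t ω}

/-- The seller's set `W^a_t = Z^a_{t+1} ∩ L_t` (pointwise: intersection over the atom). -/
def WaSet (M : Market Ω d T) (Y X X' : ℕ → Ω → Fin d → ℝ) (t : ℕ) (ω : Ω) :
    Set (Fin d → ℝ) :=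
  if T ≤ t then Set.univ
  else {v | ∀ ω' ∈ atomOf (M.F t) ω, v ∈ Za M Y X X' (t + 1) ω'}

/-- The seller's set `V^a_t = W^a_t + K_t` (pointwise). -/
def VaSet (M : Market Ω d T) (Y X X' : ℕ → Ω → Fin d → ℝ) (t : ℕ) (ω : Ω) :
    Set (Fin d → ℝ) :=
  if T ≤ t then Set.univ else WaSet M Y X X' t ω + M.cone t ω

/-- The ask (seller's) price of the game option in currency `i`. -/
def askPrice (M : Market Ω d T) (Y X X' : ℕ → Ω → Fin d → ℝ) (i : Fin d) : ℝ :=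
  sInf {z : ℝ | ∃ σ y, IsStoppingTime M.F T σ ∧ M.SelfFinancing y ∧
    HedgesSeller M Y X X' σ y ∧ y 0 = fun _ => z • eVec i}

/-- The bid (buyer's) price of the game option in currency `i`. -/
def bidPrice (M : Market Ω d T) (Y X X' : ℕ → Ω → Fin d → ℝ) (i : Fin d) : ℝ :=
  sSup {w : ℝ | ∃ z : ℝ, ∃ τ y, IsStoppingTime M.F T τ ∧ M.SelfFinancing y ∧
    HedgesBuyer M Y X X' τ y ∧ y 0 = (fun _ => z • eVec i) ∧ w = -z}

/-!
Farkas' lemma turns absence of arbitrage into a strictly positive `Z : Ω → ℝ^d` whose sums over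
the atoms of every `F_t` lie in `K*_t` (a consistent price). Then `ℙ = Z^i / Σ Z^i` and
`S_t = E_ℙ(Z / Z^i | F_t)` form an equivalent martingale pair with `S^i ≡ 1`. Such a pair is
`χ`-approximate for every randomised stopping time `χ`: the weight
`Σ_{s>t} χ_s = 1 - Σ_{s≤t} χ_s` is `F_t`-measurable, so
`E_ℙ(Σ_{s>t} χ_s S_s | F_t) = (Σ_{s>t} χ_s) S_t ∈ K*_t`.
-/

section Atoms

variable {Ω : Type*} {m : MeasurableSpace Ω} {ω ω' : Ω} {A : Set Ω}

lemma mem_atomOf_self : ω ∈ atomOf m ω := fun _ _ h => h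

lemma atomOf_subset (hA : MeasurableSet[m] A) (hω : ω ∈ A) : atomOf m ω ⊆ A :=
  fun _ h => h A hA hω

lemma atomOf_eq_measurableAtom : atomOf m ω = @measurableAtom Ω m ω := by
  ext ω'
  simp only [atomOf, measurableAtom, Set.mem_ofPred_eq, Set.mem_iInter]
  exact forall_congr' fun A => forall_comm

lemma measurableSet_atomOf [Countable Ω] : MeasurableSet[m] (atomOf m ω) := by
  rw [atomOf_eq_measurableAtom]
  exact @MeasurableSet.measurableAtom_of_countable Ω m _ ω

lemma atomOf_eq_of_mem (h : ω' ∈ atomOf m ω) : atomOf m ω' = atomOf m ω := by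
  simp only [atomOf_eq_measurableAtom] at h ⊢
  exact @measurableAtom_eq_of_mem Ω m ω' ω h

lemma mem_atomOf_iff : ω' ∈ atomOf m ω ↔ atomOf m ω' = atomOf m ω :=
  ⟨atomOf_eq_of_mem, fun h => h ▸ mem_atomOf_self⟩

lemma atomOf_top : atomOf ⊤ ω = {ω} :=
  Set.Subset.antisymm (atomOf_subset trivial rfl) (Set.singleton_subset_iff.2 mem_atomOf_self)

lemma apply_eq_of_mem_atomOf {β : Type*} [MeasurableSpace β] [MeasurableSingletonClass β]
    {f : Ω → β} (hf : Measurable[m] f) (h : ω' ∈ atomOf m ω) : f ω' = f ω :=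
  h _ (hf (measurableSet_singleton (f ω))) rfl

lemma measurable_of_forall_mem_atomOf [Countable Ω] {β : Type*} [MeasurableSpace β] {f : Ω → β}
    (h : ∀ ω ω', ω' ∈ atomOf m ω → f ω' = f ω) : Measurable[m] f := by
  intro B _
  have : f ⁻¹' B = ⋃ ω ∈ f ⁻¹' B, atomOf m ω :=
    Set.Subset.antisymm (fun ω hω => Set.mem_biUnion hω mem_atomOf_self)
      (Set.iUnion₂_subset fun ω hω ω' hω' => by simpa [Set.mem_preimage, h ω ω' hω'] using hω)
  rw [this]
  exact MeasurableSet.biUnion (Set.to_countable _) fun _ _ => measurableSet_atomOf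

end Atoms

section AtomSum

variable {Ω E : Type*} [Fintype Ω] [AddCommMonoid E] {m m' : MeasurableSpace Ω} {ω : Ω}

/-- The sum of `f` over the `m`-atom of `ω`: for a probability `p`, the conditional expectation
`E_p(f | m)` is `atomSum m (p • f) / atomSum m p`. -/
def atomSum (m : MeasurableSpace Ω) (f : Ω → E) (ω : Ω) : E :=
  ∑ ω', (atomOf m ω).indicator f ω'

lemma atomSum_eq_of_mem {f : Ω → E} {ω' : Ω} (h : ω' ∈ atomOf m ω) :
    atomSum m f ω' = atomSum m f ω := by
  rw [atomSum, atomSum, atomOf_eq_of_mem h]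

lemma atomSum_congr {f g : Ω → E} (h : ∀ a ∈ atomOf m ω, f a = g a) :
    atomSum m f ω = atomSum m g ω := by
  rw [atomSum, atomSum, Set.indicator_congr h]

lemma atomSum_sum {ι : Type*} (s : Finset ι) (f : ι → Ω → E) :
    atomSum m (fun a => ∑ k ∈ s, f k a) ω = ∑ k ∈ s, atomSum m (f k) ω := by
  unfold atomSum
  rw [← Finset.sum_fn, Finset.indicator_sum, Finset.sum_comm]
  simp only [Finset.sum_apply]

lemma atomSum_apply {ι R : Type*} [AddCommMonoid R] (f : Ω → ι → R) (j : ι) :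
    atomSum m f ω j = atomSum m (fun a => f a j) ω := by
  simp only [atomSum, Finset.sum_apply]
  exact Finset.sum_congr rfl fun a _ => by by_cases ha : a ∈ atomOf m ω <;> simp [ha]

lemma atomSum_top (f : Ω → E) : atomSum ⊤ f ω = f ω := by
  classical
  simp [atomSum, atomOf_top, Set.indicator_apply]

lemma atomSum_pos {f : Ω → ℝ} (hf : ∀ a, 0 < f a) : 0 < atomSum m f ω :=
  Finset.sum_pos' (fun a _ => Set.indicator_nonneg (fun a _ => (hf a).le) a)
    ⟨ω, Finset.mem_univ ω, by rw [Set.indicator_of_mem mem_atomOf_self]; exact hf ω⟩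

lemma atomSum_nonneg {f : Ω → ℝ} (hf : ∀ a, 0 ≤ f a) : 0 ≤ atomSum m f ω :=
  Finset.sum_nonneg fun a _ => Set.indicator_nonneg (fun a _ => hf a) a

section Module

variable {R : Type*} [Semiring R] [Module R E] [MeasurableSpace R] [MeasurableSingletonClass R]

lemma atomSum_smul_left {c : Ω → R} (hc : Measurable[m] c) (f : Ω → E) :
    atomSum m (fun a => c a • f a) ω = c ω • atomSum m f ω := by
  rw [atomSum_congr (g := fun a => c ω • f a) fun a ha => by
    rw [apply_eq_of_mem_atomOf hc ha]]
  simp only [atomSum, Set.indicator_const_smul_apply, Finset.smul_sum]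

end Module

lemma atomSum_smul_right {R : Type*} [Semiring R] [Module R E] [MeasurableSpace E]
    [MeasurableSingletonClass E] {v : Ω → E} (hv : Measurable[m] v) (c : Ω → R) :
    atomSum m (fun a => c a • v a) ω = atomSum m c ω • v ω := by
  rw [atomSum_congr (g := fun a => c a • v ω) fun a ha => by
    rw [apply_eq_of_mem_atomOf hv ha]]
  simp only [atomSum, Set.indicator_smul_const_apply, Finset.sum_smul]

lemma atomSum_indicator [Countable Ω] {A : Set Ω} (hA : MeasurableSet[m] A) (f : Ω → E) :
    atomSum m (A.indicator f) ω = A.indicator (atomSum m f) ω := by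
  by_cases hω : ω ∈ A
  · rw [Set.indicator_of_mem hω]
    exact atomSum_congr fun a ha => Set.indicator_of_mem (atomOf_subset hA hω ha) f
  · rw [Set.indicator_of_notMem hω, atomSum_congr (g := 0) fun a ha => ?_]
    · simp [atomSum]
    refine Set.indicator_of_notMem (fun haA => hω ?_) f
    exact atomOf_subset hA haA (atomOf_eq_of_mem ha ▸ mem_atomOf_self)

lemma sum_eq_of_atomSum_eq {f g : Ω → E} (h : ∀ ω, atomSum m f ω = atomSum m g ω) :
    ∑ ω, f ω = ∑ ω, g ω := by
  classical
  have hsum : ∀ φ : Ω → E, ∑ B ∈ Finset.univ.image (atomOf m), ∑ ω, B.indicator φ ω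
      = ∑ ω, φ ω := fun φ => Finset.sum_image' φ fun ω _ => by
    rw [Finset.sum_filter]
    exact Finset.sum_congr rfl fun a _ => by simp only [Set.indicator_apply, mem_atomOf_iff]
  rw [← hsum f, ← hsum g]
  refine Finset.sum_congr rfl fun B hB => ?_
  obtain ⟨ω, -, rfl⟩ := Finset.mem_image.1 hB
  exact h ω

lemma sum_indicator_eq_of_atomSum_eq {A : Set Ω} (hA : MeasurableSet[m] A) {f g : Ω → E}
    (h : ∀ ω, atomSum m f ω = atomSum m g ω) :
    ∑ ω, A.indicator f ω = ∑ ω, A.indicator g ω :=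
  sum_eq_of_atomSum_eq fun ω => by
    rw [atomSum_indicator hA, atomSum_indicator hA, funext h]

lemma atomSum_eq_of_le (hle : m ≤ m') {f g : Ω → E}
    (h : ∀ ω, atomSum m' f ω = atomSum m' g ω) : atomSum m f ω = atomSum m g ω :=
  sum_indicator_eq_of_atomSum_eq (hle _ measurableSet_atomOf) h

end AtomSum

section Farkas

variable {ι κ : Type*} [Fintype ι]

lemma dotProduct_sub_smul_eq (u v y y' : ι → ℝ) :
    (v - (v ⬝ᵥ y / (u ⬝ᵥ y)) • u) ⬝ᵥ y' = v ⬝ᵥ (y' - (u ⬝ᵥ y' / (u ⬝ᵥ y)) • y) := by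
  simp only [sub_dotProduct, dotProduct_sub, smul_dotProduct, dotProduct_smul, smul_eq_mul]
  ring

/-- Farkas' lemma. -/
theorem exists_separating_dotProduct (s : Finset κ) (g : κ → ι → ℝ) (b : ι → ℝ)
    (hb : ¬∃ c : κ → ℝ, (∀ k ∈ s, 0 ≤ c k) ∧ b = ∑ k ∈ s, c k • g k) :
    ∃ y : ι → ℝ, (∀ k ∈ s, 0 ≤ g k ⬝ᵥ y) ∧ b ⬝ᵥ y < 0 := by
  classical
  induction s using Finset.induction_on generalizing g b with
  | empty =>
    have hb0 : b ≠ 0 := fun h => hb ⟨0, by simp, by simp [h]⟩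
    refine ⟨-b, by simp, ?_⟩
    rw [dotProduct_neg, neg_neg_iff_pos]
    exact lt_of_le_of_ne (Finset.sum_nonneg fun _ _ => mul_self_nonneg _)
      (Ne.symm (dotProduct_self_eq_zero.not.mpr hb0))
  | insert a s ha ih =>
    have hb' : ∀ c : κ → ℝ, ∀ r : ℝ, (∀ k ∈ s, 0 ≤ c k) → 0 ≤ r →
        b ≠ r • g a + ∑ k ∈ s, c k • g k := by
      intro c r hc hr hbc
      refine hb ⟨Function.update c a r, fun k hk => ?_, ?_⟩
      · rcases Finset.mem_insert.1 hk with rfl | hk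
        · simpa using hr
        · simpa [Function.update_of_ne (ne_of_mem_of_not_mem hk ha)] using hc k hk
      · rw [Finset.sum_insert ha, Function.update_self, hbc]
        congr 1
        exact Finset.sum_congr rfl fun k hk => by
          rw [Function.update_of_ne (ne_of_mem_of_not_mem hk ha)]
    obtain ⟨y, hy, hby⟩ := ih g b fun ⟨c, hc, hbc⟩ => hb' c 0 hc le_rfl (by simpa using hbc)
    by_cases hay : 0 ≤ g a ⬝ᵥ y
    · exact ⟨y, Finset.forall_mem_insert _ _ _ |>.2 ⟨hay, hy⟩, hby⟩
    push Not at hay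
    -- Project along `g a` onto the hyperplane `y = 0`, separate there, and lift back.
    let P : (ι → ℝ) → ι → ℝ := fun v => v - (v ⬝ᵥ y / (g a ⬝ᵥ y)) • g a
    obtain ⟨y', hy', hby'⟩ := ih (P ∘ g) (P b) fun ⟨c, hc, hbc⟩ => by
      refine hb' c ((b ⬝ᵥ y - ∑ k ∈ s, c k * (g k ⬝ᵥ y)) / (g a ⬝ᵥ y)) hc ?_ ?_
      · refine div_nonneg_of_nonpos ?_ hay.le
        have := Finset.sum_nonneg fun k hk => mul_nonneg (hc k hk) (hy k hk)
        linarith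
      · simp only [P, Function.comp_apply, smul_sub, Finset.sum_sub_distrib, smul_smul,
          ← Finset.sum_smul] at hbc
        rw [sub_div, Finset.sum_div]
        simp only [mul_div_assoc]
        linear_combination (norm := module) hbc
    refine ⟨y' - (g a ⬝ᵥ y' / (g a ⬝ᵥ y)) • y, Finset.forall_mem_insert _ _ _ |>.2 ⟨?_, ?_⟩, ?_⟩
    · simp only [dotProduct_sub, dotProduct_smul, smul_eq_mul, div_mul_cancel₀ _ hay.ne,
        sub_self, le_refl]
    · intro k hk
      rw [← dotProduct_sub_smul_eq]
      exact hy' k hk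
    · rw [← dotProduct_sub_smul_eq]
      exact hby'

end Farkas

section SolvencyCone

variable {d : ℕ}

lemma dotp_eq_dotProduct (x y : Fin d → ℝ) : dotp x y = x ⬝ᵥ y := rfl

lemma smul_mem_posPolar {A : Set (Fin d → ℝ)} {v : Fin d → ℝ} (hv : v ∈ posPolar A) {r : ℝ}
    (hr : 0 ≤ r) : r • v ∈ posPolar A := fun y hy => by
  rw [dotp_eq_dotProduct, smul_dotProduct, smul_eq_mul]
  exact mul_nonneg hr (hv y hy)

lemma sum_mem_posPolar {ι : Type*} {A : Set (Fin d → ℝ)} {s : Finset ι} {v : ι → Fin d → ℝ}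
    (hv : ∀ k ∈ s, v k ∈ posPolar A) : ∑ k ∈ s, v k ∈ posPolar A := fun y hy => by
  rw [dotp_eq_dotProduct, sum_dotProduct]
  exact Finset.sum_nonneg fun k hk => hv k hk y hy

def coneGen (π : Fin d → Fin d → ℝ) : Fin d ⊕ Fin d × Fin d → Fin d → ℝ
  | .inl j => eVec j
  | .inr (i, j) => π i j • eVec i - eVec j

lemma mem_solvencyCone_iff {π : Fin d → Fin d → ℝ} {x : Fin d → ℝ} :
    x ∈ solvencyCone π ↔ ∃ c : Fin d ⊕ Fin d × Fin d → ℝ, (∀ w, 0 ≤ c w) ∧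
      x = ∑ w, c w • coneGen π w := by
  have hsum : ∀ c : Fin d ⊕ Fin d × Fin d → ℝ, ∑ w, c w • coneGen π w =
      (∑ i, c (.inl i) • eVec i) + ∑ i, ∑ j, c (.inr (i, j)) • (π i j • eVec i - eVec j) := by
    intro c
    rw [Fintype.sum_sum_type, Fintype.sum_prod_type]
    rfl
  constructor
  · rintro ⟨a, b, ha, hb, rfl⟩
    exact ⟨Sum.elim a fun p => b p.1 p.2, Sum.forall.2 ⟨ha, fun p => hb p.1 p.2⟩,
      (hsum (Sum.elim a fun p => b p.1 p.2)).symm⟩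
  · rintro ⟨c, hc, rfl⟩
    exact ⟨_, _, fun i => hc _, fun i j => hc _, hsum c⟩

lemma zero_mem_solvencyCone (π : Fin d → Fin d → ℝ) : (0 : Fin d → ℝ) ∈ solvencyCone π :=
  mem_solvencyCone_iff.2 ⟨0, fun _ => le_rfl, by simp⟩

lemma coneGen_mem_solvencyCone (π : Fin d → Fin d → ℝ) (w : Fin d ⊕ Fin d × Fin d) :
    coneGen π w ∈ solvencyCone π := by
  classical
  refine mem_solvencyCone_iff.2 ⟨Pi.single w 1, fun w' => ?_, ?_⟩
  · by_cases h : w' = w <;> simp [h]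
  · simp [Pi.single_apply, ite_smul]

lemma sum_smul_mem_solvencyCone {π : Fin d → Fin d → ℝ} {ι : Type*} {s : Finset ι}
    {c : ι → ℝ} {x : ι → Fin d → ℝ} (hc : ∀ k ∈ s, 0 ≤ c k)
    (hx : ∀ k ∈ s, x k ∈ solvencyCone π) : ∑ k ∈ s, c k • x k ∈ solvencyCone π := by
  choose! a ha hxa using fun k hk => mem_solvencyCone_iff.1 (hx k hk)
  refine mem_solvencyCone_iff.2 ⟨fun w => ∑ k ∈ s, c k * a k w,
    fun w => Finset.sum_nonneg fun k hk => mul_nonneg (hc k hk) (ha k hk w), ?_⟩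
  rw [Finset.sum_congr rfl fun k hk => by rw [hxa k hk]]
  simp only [Finset.smul_sum, Finset.sum_smul, smul_smul]
  exact Finset.sum_comm

lemma mem_posPolar_solvencyCone_iff {π : Fin d → Fin d → ℝ} {v : Fin d → ℝ} :
    v ∈ posPolar (solvencyCone π) ↔ ∀ w, 0 ≤ dotp v (coneGen π w) := by
  refine ⟨fun hv w => hv _ (coneGen_mem_solvencyCone π w), fun hv x hx => ?_⟩
  obtain ⟨c, hc, rfl⟩ := mem_solvencyCone_iff.1 hx
  rw [dotp_eq_dotProduct, dotProduct_sum]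
  exact Finset.sum_nonneg fun w _ => by
    rw [dotProduct_smul, smul_eq_mul]
    exact mul_nonneg (hc w) (hv w)

end SolvencyCone

lemma IsRandomisedST.measurable_sum_Icc {Ω : Type*} [Fintype Ω] {F : ℕ → MeasurableSpace Ω}
    {T : ℕ} {χ : ℕ → Ω → ℝ} (hF : Monotone F) (hχ : IsRandomisedST F T χ) {t : ℕ}
    (ht : t ≤ T) : Measurable[F t] fun ω => ∑ s ∈ Finset.Icc (t + 1) T, χ s ω := by
  have hsplit : ∀ ω, ∑ s ∈ Finset.Icc (t + 1) T, χ s ω = 1 - ∑ s ∈ Finset.range (t + 1), χ s ω :=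
    fun ω => by
      rw [← hχ.2.2 ω, ← Finset.sum_range_add_sum_Ico _ (by omega : t + 1 ≤ T + 1),
        Finset.Ico_add_one_right_eq_Icc]
      ring
  simp_rw [hsplit]
  exact measurable_const.sub (Finset.measurable_sum _ fun s hs =>
    (hχ.1 s (by simp at hs; omega)).mono (hF (by simp at hs; omega)) le_rfl)

namespace Market

variable {Ω : Type*} [Fintype Ω] {d T : ℕ}

lemma nonempty (M : Market Ω d T) : Nonempty Ω := by
  by_contra h
  have := M.P_sum
  simp [not_nonempty_iff.1 h] at this

lemma cone_eq_of_mem_atomOf (M : Market Ω d T) {t : ℕ} (ht : t ≤ T) {ω ω' : Ω}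
    (h : ω' ∈ atomOf (M.F t) ω) : M.cone t ω' = M.cone t ω := by
  simp only [Market.cone, apply_eq_of_mem_atomOf (M.pi_meas t ht _ _) h]

/-- Sums `Σ_t η_t` of adapted `K_t`-valued transfers are the nonnegative combinations of the
`atomGen t q`, which brings no arbitrage within reach of Farkas' lemma. -/
def atomGen (M : Market Ω d T) (t : ℕ) (q : Ω × (Fin d ⊕ Fin d × Fin d)) :
    Ω → Fin d → ℝ :=
  (atomOf (M.F t) q.1).indicator fun _ => coneGen (fun i j => M.pi t i j q.1) q.2

/-- `Z ω` plays the role of `ℙ(ω) Z_T(ω)` for a consistent price process `Z`, whose sums over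
the atoms of `F_t` are `ℙ(atom) Z_t`. -/
def IsConsistentPrice (M : Market Ω d T) (Z : Ω → Fin d → ℝ) : Prop :=
  ∀ t ≤ T, ∀ ω, atomSum (M.F t) Z ω ∈ posPolar (M.cone t ω)

variable {M : Market Ω d T}

/-- Otherwise `y_s = -Σ_{t<s} η_t` is an arbitrage. -/
theorem NoArbitrage.eq_zero_of_add_sum_eq_zero (hNA : M.NoArbitrage)
    {η : ℕ → Ω → Fin d → ℝ} (hη : ∀ t ≤ T, Measurable[M.F t] (η t))
    (hηK : ∀ t ≤ T, ∀ ω, η t ω ∈ M.cone t ω) {x : Ω → Fin d → ℝ} (hx : ∀ ω j, 0 ≤ x ω j)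
    (hsum : ∀ ω, x ω + ∑ t ∈ Finset.range (T + 1), η t ω = 0) : x = 0 := by
  by_contra hx0
  refine hNA ⟨fun s ω => -∑ t ∈ Finset.range s, η t ω, ⟨?_, fun t ht => ?_, fun t ht ω => ?_⟩,
    fun ω => by simp, x, hx, hx0, fun ω => ?_⟩
  · simp only [Finset.range_zero, Finset.sum_empty, neg_zero]
    exact measurable_const
  · exact (Finset.measurable_sum _ fun u hu =>
      (hη u (by simp at hu; omega)).mono (M.F_mono u t (by simp at hu; omega)) le_rfl).neg
  · simpa [Finset.sum_range_succ] using hηK t ht.le ω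
  · have := hsum ω
    rw [Finset.sum_range_succ] at this
    convert hηK T le_rfl ω using 1
    linear_combination (norm := module) -this

lemma measurable_atomGen (t : ℕ) (q : Ω × (Fin d ⊕ Fin d × Fin d)) :
    Measurable[M.F t] (M.atomGen t q) :=
  measurable_const.indicator measurableSet_atomOf

lemma atomGen_mem_cone {t : ℕ} (ht : t ≤ T) (q : Ω × (Fin d ⊕ Fin d × Fin d)) (ω : Ω) :
    M.atomGen t q ω ∈ M.cone t ω := by
  by_cases hω : ω ∈ atomOf (M.F t) q.1
  · rw [atomGen, Set.indicator_of_mem hω, M.cone_eq_of_mem_atomOf ht hω]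
    exact coneGen_mem_solvencyCone _ _
  · rw [atomGen, Set.indicator_of_notMem hω]
    exact zero_mem_solvencyCone _

lemma sum_dotp_atomGen (t : ℕ) (q : Ω × (Fin d ⊕ Fin d × Fin d)) (Y : Ω → Fin d → ℝ) :
    ∑ ω, dotp (M.atomGen t q ω) (Y ω) =
      dotp (atomSum (M.F t) Y q.1) (coneGen (fun i j => M.pi t i j q.1) q.2) := by
  rw [atomSum, dotp_eq_dotProduct, sum_dotProduct]
  refine Finset.sum_congr rfl fun ω _ => ?_
  by_cases hω : ω ∈ atomOf (M.F t) q.1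
  · simp [atomGen, hω, dotp_eq_dotProduct, dotProduct_comm]
  · simp [atomGen, hω, dotp_eq_dotProduct]

theorem NoArbitrage.exists_isConsistentPrice (hNA : M.NoArbitrage) (ω₀ : Ω) (j₀ : Fin d) :
    ∃ Y, M.IsConsistentPrice Y ∧ 0 < Y ω₀ j₀ := by
  classical
  let s := Finset.range (T + 1) ×ˢ (Finset.univ : Finset (Ω × (Fin d ⊕ Fin d × Fin d)))
  let g : ℕ × Ω × (Fin d ⊕ Fin d × Fin d) → Ω × Fin d → ℝ := fun k p =>
    M.atomGen k.1 k.2 p.1 p.2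
  have hg : ∀ k y, g k ⬝ᵥ y = ∑ ω, dotp (M.atomGen k.1 k.2 ω) fun j => y (ω, j) := fun k y =>
    Fintype.sum_prod_type _
  let e : Ω × Fin d → ℝ := Pi.single (ω₀, j₀) 1
  have hsep : ¬∃ c : ℕ × Ω × (Fin d ⊕ Fin d × Fin d) → ℝ, (∀ k ∈ s, 0 ≤ c k) ∧
      -e = ∑ k ∈ s, c k • g k := by
    rintro ⟨c, hc, hcomb⟩
    have hx := hNA.eq_zero_of_add_sum_eq_zero (η := fun t ω => ∑ q, c (t, q) • M.atomGen t q ω)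
      (x := fun ω j => e (ω, j))
      (fun t _ => Finset.measurable_sum _ fun q _ =>
        (measurable_atomGen t q).const_smul (c (t, q)))
      (fun t ht ω => sum_smul_mem_solvencyCone (fun q _ => hc (t, q) (by simp [s]; omega))
        fun q _ => atomGen_mem_cone ht q ω)
      (fun ω j => by by_cases h : (ω, j) = (ω₀, j₀) <;> simp [e, h])
      (fun ω => funext fun j => by
        have := congrFun hcomb (ω, j)
        simp only [s, g, Finset.sum_product, Finset.sum_apply, Pi.smul_apply, smul_eq_mul,
          Pi.neg_apply] at this
        simp only [Pi.add_apply, Finset.sum_apply, Pi.smul_apply, smul_eq_mul, Pi.zero_apply]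
        linarith)
    simpa [e] using congrFun (congrFun hx ω₀) j₀
  obtain ⟨y, hy, hby⟩ := exists_separating_dotProduct s g _ hsep
  refine ⟨fun ω j => y (ω, j), fun t ht ω => mem_posPolar_solvencyCone_iff.2 fun w => ?_, ?_⟩
  · have := hy (t, ω, w) (by simp [s]; omega)
    rwa [hg, sum_dotp_atomGen] at this
  · simpa [e] using hby

lemma IsConsistentPrice.nonneg {Y : Ω → Fin d → ℝ} (hY : M.IsConsistentPrice Y) (ω : Ω)
    (j : Fin d) : 0 ≤ Y ω j := by
  have := hY T le_rfl ω (eVec j) (coneGen_mem_solvencyCone _ (.inl j))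
  rwa [M.F_top, atomSum_top, dotp_eq_dotProduct, eVec, dotProduct_single, mul_one] at this

lemma IsConsistentPrice.sum {ι : Type*} {s : Finset ι} {Y : ι → Ω → Fin d → ℝ}
    (hY : ∀ k ∈ s, M.IsConsistentPrice (Y k)) : M.IsConsistentPrice (∑ k ∈ s, Y k) := by
  intro t ht ω
  rw [Finset.sum_fn, atomSum_sum]
  exact sum_mem_posPolar fun k hk => hY k hk t ht ω

/-- The Kabanov–Stricker theorem. -/
theorem NoArbitrage.exists_isConsistentPrice_pos (hNA : M.NoArbitrage) :
    ∃ Z, M.IsConsistentPrice Z ∧ ∀ ω j, 0 < Z ω j := by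
  choose Y hY hYpos using hNA.exists_isConsistentPrice
  refine ⟨∑ q : Ω × Fin d, Y q.1 q.2, IsConsistentPrice.sum fun q _ => hY q.1 q.2,
    fun ω j => ?_⟩
  rw [Finset.sum_apply, Finset.sum_apply]
  exact Finset.sum_pos' (fun q _ => (hY q.1 q.2).nonneg ω j)
    ⟨(ω, j), Finset.mem_univ _, hYpos ω j⟩

theorem IsConsistentPrice.exists_martingalePair {Z : Ω → Fin d → ℝ} (hZ : M.IsConsistentPrice Z)
    (hZpos : ∀ ω j, 0 < Z ω j) (i : Fin d) :
    ∃ p S, MartingalePair M p S ∧ ∀ t ω, t ≤ T → S t ω i = 1 := by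
  have := M.nonempty
  set C := ∑ ω, Z ω i
  have hC : 0 < C := Finset.sum_pos (fun ω _ => hZpos ω i) Finset.univ_nonempty
  have hμi : ∀ t ω, 0 < atomSum (M.F t) Z ω i := fun t ω => by
    rw [atomSum_apply]
    exact atomSum_pos fun a => hZpos a i
  let S : ℕ → Ω → Fin d → ℝ := fun t ω => (atomSum (M.F t) Z ω i)⁻¹ • atomSum (M.F t) Z ω
  have hSi : ∀ t ω, S t ω i = 1 := fun t ω => by
    simp [S, inv_mul_cancel₀ (hμi t ω).ne']
  have hS : ∀ t, Measurable[M.F t] (S t) := fun t =>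
    measurable_of_forall_mem_atomOf fun ω ω' h => by simp only [S, atomSum_eq_of_mem h]
  have hpS : ∀ t ω, atomSum (M.F t) (fun a => (Z a i / C) • S t a) ω =
      atomSum (M.F t) (fun a => C⁻¹ • Z a) ω := fun t ω => by
    simp only [div_eq_inv_mul, ← smul_eq_mul (a := C⁻¹)]
    rw [atomSum_smul_right (hS t), atomSum_smul_left measurable_const,
      atomSum_smul_left measurable_const, ← atomSum_apply]
    simp only [S, smul_smul, smul_eq_mul, mul_assoc, mul_inv_cancel₀ (hμi t ω).ne', mul_one]
  refine ⟨fun ω => Z ω i / C, S, ⟨fun ω => div_pos (hZpos ω i) hC, ?_, fun t _ => hS t,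
    fun t ht A hA => ?_, fun t ω ht => ⟨?_, fun h => by simpa [h] using hSi t ω⟩⟩,
    fun t ω _ => hSi t ω⟩
  · rw [← Finset.sum_div, div_self hC.ne']
  · rw [sum_indicator_eq_of_atomSum_eq (M.F_mono t (t + 1) t.le_succ A hA) (hpS (t + 1)),
      sum_indicator_eq_of_atomSum_eq hA (hpS t)]
  · exact smul_mem_posPolar (hZ t ht ω) (inv_nonneg.2 (hμi t ω).le)

end Market

namespace MartingalePair

variable {Ω : Type*} [Fintype Ω] {d T : ℕ} {M : Market Ω d T} {p : Ω → ℝ}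
  {S : ℕ → Ω → Fin d → ℝ}

theorem atomSum_eq_terminal (hpS : MartingalePair M p S) {t : ℕ} (ht : t ≤ T) (ω : Ω) :
    atomSum (M.F t) (fun a => p a • S t a) ω = atomSum (M.F t) (fun a => p a • S T a) ω := by
  induction ht using Nat.decreasingInduction generalizing ω with
  | self => rfl
  | of_succ t ht ih =>
    exact (hpS.2.2.2.1 t ht _ measurableSet_atomOf).symm.trans
      (atomSum_eq_of_le (M.F_mono t (t + 1) t.le_succ) ih)

theorem atomSum_smul_sum_Icc (hpS : MartingalePair M p S) {χ : ℕ → Ω → ℝ}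
    (hχ : IsRandomisedST M.F T χ) {t : ℕ} (ht : t ≤ T) (ω : Ω) :
    atomSum (M.F t) (fun a => p a • ∑ s ∈ Finset.Icc (t + 1) T, χ s a • S s a) ω =
      (∑ s ∈ Finset.Icc (t + 1) T, χ s ω) • atomSum (M.F t) p ω • S t ω := by
  have hχS : ∀ s ∈ Finset.Icc (t + 1) T,
      atomSum (M.F t) (fun a => χ s a • p a • S s a) ω =
        atomSum (M.F t) (fun a => χ s a • p a • S T a) ω := fun s hs => by
    have hs := Finset.mem_Icc.1 hs
    refine atomSum_eq_of_le (M.F_mono t s (by omega)) fun ω' => ?_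
    rw [atomSum_smul_left (hχ.1 s hs.2), atomSum_smul_left (hχ.1 s hs.2),
      hpS.atomSum_eq_terminal hs.2]
  calc atomSum (M.F t) (fun a => p a • ∑ s ∈ Finset.Icc (t + 1) T, χ s a • S s a) ω
      = ∑ s ∈ Finset.Icc (t + 1) T, atomSum (M.F t) (fun a => χ s a • p a • S s a) ω := by
        simp only [Finset.smul_sum, smul_comm (p _)]
        exact atomSum_sum _ _
    _ = ∑ s ∈ Finset.Icc (t + 1) T, atomSum (M.F t) (fun a => χ s a • p a • S T a) ω :=
        Finset.sum_congr rfl hχS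
    _ = (∑ s ∈ Finset.Icc (t + 1) T, χ s ω) • atomSum (M.F t) (fun a => p a • S T a) ω := by
        rw [← atomSum_sum, ← atomSum_smul_left
          (hχ.measurable_sum_Icc (fun _ _ => M.F_mono _ _) ht)]
        simp only [Finset.sum_smul]
    _ = (∑ s ∈ Finset.Icc (t + 1) T, χ s ω) • atomSum (M.F t) p ω • S t ω := by
        rw [← hpS.atomSum_eq_terminal ht, atomSum_smul_right (hpS.2.2.1 t ht)]

theorem approxPair (hpS : MartingalePair M p S) {χ : ℕ → Ω → ℝ}
    (hχ : IsRandomisedST M.F T χ) : ApproxPair M χ p S := by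
  refine ⟨fun ω => (hpS.1 ω).le, hpS.2.1, hpS.2.2.1, fun t ω ht => hpS.2.2.2.2 t ω ht,
    fun t ω ht => ?_⟩
  change atomSum _ _ ω ∈ _
  rw [hpS.atomSum_smul_sum_Icc hχ ht]
  refine smul_mem_posPolar (smul_mem_posPolar (hpS.2.2.2.2 t ω ht).1 ?_) ?_
  · exact atomSum_nonneg fun a => (hpS.1 a).le
  · exact Finset.sum_nonneg fun s hs => hχ.2.1 s ω (Finset.mem_Icc.1 hs).2

end MartingalePair

/-- If the model is free of arbitrage then for every randomised stopping time `χ` and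
every currency `i` the family `P^i(χ)` of `χ`-approximate equivalent martingale pairs
with `S^i ≡ 1` is nonempty, and consequently so is the family `P̄^i(χ)` of
`χ`-approximate pairs with `S^i ≡ 1`. -/
theorem approxPairI_nonempty {Ω : Type*} [Fintype Ω] {d T : ℕ} (M : Market Ω d T)
    (hNA : M.NoArbitrage) (χ : ℕ → Ω → ℝ) (hχ : IsRandomisedST M.F T χ) (i : Fin d) :
    (∃ (p : Ω → ℝ) (S : ℕ → Ω → Fin d → ℝ), EquivApproxPairI M χ i p S) ∧
    (∃ (p : Ω → ℝ) (S : ℕ → Ω → Fin d → ℝ), ApproxPairI M χ i p S) := by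
  obtain ⟨Z, hZ, hZpos⟩ := hNA.exists_isConsistentPrice_pos
  obtain ⟨p, S, hpS, hSi⟩ := hZ.exists_martingalePair hZpos i
  have hEquiv : EquivApproxPairI M χ i p S := ⟨⟨hpS.approxPair hχ, hSi⟩, hpS.1⟩
  exact ⟨⟨p, S, hEquiv⟩, ⟨p, S, hEquiv.1⟩⟩
end
end

section
/- If (σ,y) ∈ T × Φ hedges the game option (Y,X,X') for the seller, then for every t = 0,…,T one has y_t ∈ Z^a_t on the event {t ≤ σ} and y_t ∈ V^a_t ∩ Y^a_t on the event {t < σ}. In particular y_0 ∈ Z^a_0. -/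
open Pointwise
open scoped MeasureTheory

noncomputable section

variable {Ω : Type*}

variable [Fintype Ω] {d T : ℕ}

/-- If `(σ,y)` hedges the game option `(Y,X,X')` for the seller, then for every
`t = 0,…,T` one has `y_t ∈ Z^a_t` on `{t ≤ σ}` and `y_t ∈ V^a_t ∩ Y^a_t` on `{t < σ}`.
In particular `y_0 ∈ Z^a_0`. -/
theorem hedge_mem_Za {Ω : Type*} [Fintype Ω] {d T : ℕ}
    (M : Market Ω d T) (Y X X' : ℕ → Ω → Fin d → ℝ) (hGO : IsGameOption M Y X X')
    (σ : Ω → ℕ) (y : ℕ → Ω → Fin d → ℝ)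
    (hσ : IsStoppingTime M.F T σ) (hy : M.SelfFinancing y)
    (hh : HedgesSeller M Y X X' σ y) :
    (∀ t ω, t ≤ T →
        (t ≤ σ ω → y t ω ∈ Za M Y X X' t ω) ∧
        (t < σ ω → y t ω ∈ VaSet M Y X X' t ω ∩ YaSet M Y t ω)) ∧
    ∀ ω, y 0 ω ∈ Za M Y X X' 0 ω := by
  classical
  have hconst : ∀ c, c ≤ T → IsStoppingTime M.F T (fun _ : Ω => c) := by
    intro c hc
    refine ⟨fun _ => hc, fun t => ?_⟩
    by_cases h : c ≤ t
    · simp [h]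
    · simp [h]
  have main : ∀ k t, T - t = k → t ≤ T → ∀ ω,
      (t ≤ σ ω → y t ω ∈ Za M Y X X' t ω) ∧
      (t < σ ω → y t ω ∈ VaSet M Y X X' t ω ∩ YaSet M Y t ω) := by
    intro k
    induction k with
    | zero =>
      intro t hk htT ω
      have ht : t = T := by omega
      refine ⟨fun hle => ?_, fun hlt => absurd (hσ.1 ω) (by omega)⟩
      have hσω : σ ω = t := le_antisymm (ht ▸ hσ.1 ω) hle
      have h := hh (fun _ => t) (hconst t htT) ω
      rw [Za, if_pos (le_of_eq ht.symm)]
      simpa [payoffQ, hσω, ht] using h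
    | succ k ih =>
      intro t hk htT ω
      have htT' : t < T := by omega
      have hTle : ¬ T ≤ t := by omega
      have hbY : t < σ ω → y t ω ∈ YaSet M Y t ω := by
        intro hlt
        have h := hh (fun _ => t) (hconst t htT) ω
        have hmin : min (σ ω) t = t := by omega
        simpa [YaSet, payoffQ, hmin, hlt] using h
      have hbV : t < σ ω → y t ω ∈ VaSet M Y X X' t ω := by
        intro hlt
        have hkmem : y t ω - y (t + 1) ω ∈ M.cone t ω := hy.2.2 t htT' ω
        have hw : ∀ ω' ∈ atomOf (M.F t) ω, y (t + 1) ω ∈ Za M Y X X' (t + 1) ω' := by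
          intro ω' hω'
          have hσ' : t < σ ω' := by
            have hA : MeasurableSet[M.F t] {ω'' | σ ω'' ≤ t} := hσ.2 t
            have hmem := hω' {ω'' | σ ω'' ≤ t}ᶜ hA.compl (not_le.mpr hlt)
            exact not_le.mp hmem
          have hyeq : y (t + 1) ω' = y (t + 1) ω := by
            have hA : MeasurableSet[M.F t] (y (t + 1) ⁻¹' {y (t + 1) ω}) :=
              hy.2.1 t htT' (measurableSet_singleton _)
            exact hω' _ hA rfl
          have hZ := (ih (t + 1) (by omega) (by omega) ω').1 (by omega)
          exact hyeq ▸ hZ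
        have hwmem : y (t + 1) ω ∈ WaSet M Y X X' t ω := by
          rw [WaSet, if_neg hTle]
          exact hw
        have hadd := Set.add_mem_add hwmem hkmem
        have heq : y (t + 1) ω + (y t ω - y (t + 1) ω) = y t ω := by abel
        rw [heq] at hadd
        rw [VaSet, if_neg hTle]
        exact hadd
      refine ⟨?_, fun hlt => ⟨hbV hlt, hbY hlt⟩⟩
      intro hle
      rcases eq_or_lt_of_le hle with heq | hlt
      · have hσT : σ ω ≤ T := hσ.1 ω
        have h := hh (fun _ => T) (hconst T le_rfl) ω
        have hmin : min (σ ω) T = t := by omega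
        have hnlt : ¬ T < t := by omega
        have hmin' : min t T = t := by omega
        rw [Za, if_neg hTle]
        refine Set.mem_union_right _ ?_
        simpa [payoffQ, hmin, hmin', ← heq, htT', hnlt] using h
      · have hV := hbV hlt
        have hY := hbY hlt
        rw [Za, if_neg hTle]
        refine Set.mem_union_left _ ⟨?_, hY⟩
        rw [VaSet, if_neg hTle, WaSet, if_neg hTle] at hV
        exact hV
  refine ⟨fun t ω htT => main (T - t) t rfl htT ω, fun ω =>
    (main (T - 0) 0 rfl (Nat.zero_le _) ω).1 (Nat.zero_le _)⟩
end
end
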